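/- arXiv:1304.4578 — 4 statements merged into one kernel-verified Lean document; each statement's English description precedes it below -/
import Mathlib

section
/- Let ξ_1,…,ξ_M and ζ_1,…,ζ_N be mutually independent real random variables, all identically distributed with a common even probability density p, and let z = ξ + ζ where ξ, ζ are independent with density p. Then for every u ∈ ℝ, the variance of the real part of the array pattern satisfies Var[Re β(u)] = (1/(2MN))(1 + ψ_z(2u)) + ψ_z(u)·[ ((N+M−2)/(2MN))·(1 + ψ_ξ(2u)) − ψ_z(u)·(N+M−1)/(MN) ], where ψ_ξ is the (common) characteristic function of ξ. -/
open MeasureTheory ProbabilityTheory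

/-- Characteristic function `ψ_x(u) = E[exp(i u x)]` of a real random variable `x`
under the measure `P`. -/
noncomputable def charFn {Ω : Type*} [MeasurableSpace Ω] (P : Measure Ω) (x : Ω → ℝ)
    (u : ℝ) : ℂ :=
  ∫ ω, Complex.exp (Complex.I * ((u * x ω : ℝ) : ℂ)) ∂P

/-- The random array pattern
`β(u) = (1/(MN)) Σ_{m=1}^{M} Σ_{n=1}^{N} exp(i u (ζ_n + ξ_m))`. -/
noncomputable def arrayPattern {Ω : Type*} {M N : ℕ} (ξ : Fin M → Ω → ℝ) (ζ : Fin N → Ω → ℝ)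
    (u : ℝ) (ω : Ω) : ℂ :=
  (1 / (M * N) : ℂ) *
    ∑ m : Fin M, ∑ n : Fin N, Complex.exp (Complex.I * ((u * (ζ n ω + ξ m ω) : ℝ) : ℂ))

/-!
Over each array write `C = ∑ cos (u ·)` and `S = ∑ sin (u ·)`, so that
`Re β = (C_ξ C_ζ - S_ξ S_ζ) / (MN)`. The two arrays are independent, so `E[(Re β)²]` factors into
second moments of `C` and `S` over a single array; for i.i.d. positions these are
`n E[f g] + n (n - 1) E[f] E[g]`. Evenness of the law kills every term with an odd power of a sine,
and `cos² = (1 + cos 2·) / 2` expresses the rest through `ψ_ξ(u)` and `ψ_ξ(2u)`; finally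
`ψ_z = ψ_ξ²` by independence of `ξ` and `ζ`.
-/

open Real Finset ComplexConjugate

lemma conj_charFun_of_map_neg_eq {E : Type*} [NormedAddCommGroup E] [InnerProductSpace ℝ E]
    [MeasurableSpace E] [BorelSpace E] {μ : Measure E} (h : μ.map (fun x => -x) = μ) (t : E) :
    conj (charFun μ t) = charFun μ t := by
  rw [← charFun_neg, ← neg_one_smul ℝ t, ← charFun_map_smul]
  simp only [neg_one_smul, h]

section RealLine

variable {μ : Measure ℝ}

lemma integrable_cexp_mul_I [IsFiniteMeasure μ] (t : ℝ) :
    Integrable (fun x : ℝ => Complex.exp (t * x * Complex.I)) μ :=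
  (integrable_const (1 : ℝ)).mono (by fun_prop)
    (ae_of_all _ fun x => by simp [← Complex.ofReal_mul, Complex.norm_exp_ofReal_mul_I])

lemma memLp_cos_mul [IsFiniteMeasure μ] (t : ℝ) (p : ENNReal) :
    MemLp (fun x => cos (t * x)) p μ :=
  MemLp.of_bound (by fun_prop) 1 (ae_of_all _ fun x => by simp [abs_cos_le_one])

lemma memLp_sin_mul [IsFiniteMeasure μ] (t : ℝ) (p : ENNReal) :
    MemLp (fun x => sin (t * x)) p μ :=
  MemLp.of_bound (by fun_prop) 1 (ae_of_all _ fun x => by simp [abs_sin_le_one])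

lemma integral_cos_mul_eq_re_charFun [IsFiniteMeasure μ] (t : ℝ) :
    ∫ x, cos (t * x) ∂μ = (charFun μ t).re := by
  rw [charFun_apply_real, ← RCLike.re_eq_complex_re, ← integral_re (integrable_cexp_mul_I t)]
  simp [← Complex.ofReal_mul, Complex.exp_ofReal_mul_I_re]

lemma integral_sin_mul_eq_im_charFun [IsFiniteMeasure μ] (t : ℝ) :
    ∫ x, sin (t * x) ∂μ = (charFun μ t).im := by
  rw [charFun_apply_real, ← RCLike.im_eq_complex_im, ← integral_im (integrable_cexp_mul_I t)]
  simp [← Complex.ofReal_mul, Complex.exp_ofReal_mul_I_im]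

lemma integral_cos_mul_sq [IsProbabilityMeasure μ] (t : ℝ) :
    ∫ x, cos (t * x) ^ 2 ∂μ = (1 + (charFun μ (2 * t)).re) / 2 := by
  have h : ∀ x, cos (t * x) ^ 2 = (1 + cos (2 * t * x)) / 2 := fun x => by
    rw [cos_sq, mul_assoc]; ring
  simp_rw [h]
  rw [integral_div, integral_add (integrable_const 1)
    (memLp_one_iff_integrable.1 (memLp_cos_mul _ 1)), integral_cos_mul_eq_re_charFun]
  simp

lemma integral_sin_mul_sq [IsProbabilityMeasure μ] (t : ℝ) :
    ∫ x, sin (t * x) ^ 2 ∂μ = (1 - (charFun μ (2 * t)).re) / 2 := by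
  have h : ∀ x, sin (t * x) ^ 2 = (1 - cos (2 * t * x)) / 2 := fun x => by
    rw [sin_sq, cos_sq, mul_assoc]; ring
  simp_rw [h]
  rw [integral_div, integral_sub (integrable_const 1)
    (memLp_one_iff_integrable.1 (memLp_cos_mul _ 1)), integral_cos_mul_eq_re_charFun]
  simp

lemma integral_sin_mul_eq_zero_of_map_neg_eq [IsFiniteMeasure μ]
    (heven : μ.map (fun x => -x) = μ) (t : ℝ) : ∫ x, sin (t * x) ∂μ = 0 := by
  rw [integral_sin_mul_eq_im_charFun, ← Complex.conj_eq_iff_im]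
  exact conj_charFun_of_map_neg_eq heven t

lemma integral_cos_mul_mul_sin_mul_eq_zero_of_map_neg_eq [IsFiniteMeasure μ]
    (heven : μ.map (fun x => -x) = μ) (t : ℝ) : ∫ x, cos (t * x) * sin (t * x) ∂μ = 0 := by
  have h : ∀ x, cos (t * x) * sin (t * x) = sin (2 * t * x) / 2 := fun x => by
    rw [mul_assoc, sin_two_mul]; ring
  simp_rw [h]
  rw [integral_div, integral_sin_mul_eq_zero_of_map_neg_eq heven, zero_div]

end RealLine

section IIDSum

variable {Ω ι 𝓧 : Type*} [MeasurableSpace Ω] [MeasurableSpace 𝓧] {P : Measure Ω} [Fintype ι]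
  {V : ι → Ω → 𝓧} {μ : Measure 𝓧}

lemma ProbabilityTheory.HasLaw.memLp_comp {E : Type*} [NormedAddCommGroup E] {X : Ω → 𝓧}
    (hX : HasLaw X μ P) {p : ENNReal} {h : 𝓧 → E} (hh : MemLp h p μ) :
    MemLp (fun ω => h (X ω)) p P := by
  rw [← hX.map_eq] at hh
  exact (memLp_map_measure_iff hh.1 hX.aemeasurable).1 hh

lemma integral_sum_comp_of_hasLaw (hlaw : ∀ i, HasLaw (V i) μ P) {f : 𝓧 → ℝ}
    (hf : Integrable f μ) : ∫ ω, ∑ i, f (V i ω) ∂P = Fintype.card ι * ∫ x, f x ∂μ := by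
  rw [integral_finsetSum _ fun i _ =>
    memLp_one_iff_integrable.1 ((hlaw i).memLp_comp (memLp_one_iff_integrable.2 hf))]
  have h : ∀ i, ∫ ω, f (V i ω) ∂P = ∫ x, f x ∂μ := fun i => (hlaw i).integral_comp hf.1
  simp [h]

lemma integral_sum_mul_sum_of_iIndepFun (hind : iIndepFun V P) (hlaw : ∀ i, HasLaw (V i) μ P)
    {f g : 𝓧 → ℝ} (hf : MemLp f 2 μ) (hg : MemLp g 2 μ) :
    ∫ ω, (∑ i, f (V i ω)) * ∑ j, g (V j ω) ∂P
      = Fintype.card ι * ∫ x, f x * g x ∂μ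
        + Fintype.card ι * (Fintype.card ι - 1) * ((∫ x, f x ∂μ) * ∫ x, g x ∂μ) := by
  classical
  have hpair : ∀ i j, ∫ ω, f (V i ω) * g (V j ω) ∂P
      = (∫ x, f x ∂μ) * (∫ x, g x ∂μ) + if i = j then
          ∫ x, f x * g x ∂μ - (∫ x, f x ∂μ) * ∫ x, g x ∂μ else 0 := by
    intro i j
    split_ifs with hij
    · subst hij
      rw [add_sub_cancel, ← (hlaw i).integral_comp (f := fun x => f x * g x) (hf.1.mul hg.1)]
      rfl
    · rw [(hind.indepFun hij).integral_fun_comp_mul_comp (hlaw i).aemeasurable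
        (hlaw j).aemeasurable (by rw [(hlaw i).map_eq]; exact hf.1)
        (by rw [(hlaw j).map_eq]; exact hg.1), ← (hlaw i).integral_comp hf.1,
        ← (hlaw j).integral_comp hg.1, add_zero]
      rfl
  have hint : ∀ i j, Integrable (fun ω => f (V i ω) * g (V j ω)) P := fun i j =>
    memLp_one_iff_integrable.1 (((hlaw j).memLp_comp hg).mul ((hlaw i).memLp_comp hf))
  simp_rw [sum_mul_sum]
  rw [integral_finsetSum _ fun i _ => integrable_finsetSum _ fun j _ => hint i j]
  simp_rw [integral_finsetSum _ fun j _ => hint _ j, hpair, sum_add_distrib, sum_ite_eq,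
    sum_const, card_univ]
  simp
  ring

end IIDSum

section TrigSum

variable {ι κ : Type*} [Fintype ι] [Fintype κ]

noncomputable def cosSum (u : ℝ) (x : ι → ℝ) : ℝ := ∑ i, cos (u * x i)

noncomputable def sinSum (u : ℝ) (x : ι → ℝ) : ℝ := ∑ i, sin (u * x i)

noncomputable def sumCosAdd (u : ℝ) (x : ι → ℝ) (y : κ → ℝ) : ℝ :=
  ∑ i, ∑ j, cos (u * (x i + y j))

lemma sumCosAdd_eq (u : ℝ) (x : ι → ℝ) (y : κ → ℝ) :
    sumCosAdd u x y = cosSum u x * cosSum u y - sinSum u x * sinSum u y := by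
  simp only [sumCosAdd, cosSum, sinSum, sum_mul_sum, ← sum_sub_distrib, mul_add, cos_add]

@[fun_prop]
lemma continuous_cosSum (u : ℝ) : Continuous (cosSum (ι := ι) u) := by
  unfold cosSum; fun_prop

@[fun_prop]
lemma continuous_sinSum (u : ℝ) : Continuous (sinSum (ι := ι) u) := by
  unfold sinSum; fun_prop

lemma abs_cosSum_le (u : ℝ) (x : ι → ℝ) : |cosSum u x| ≤ Fintype.card ι :=
  (abs_sum_le_sum_abs _ _).trans
    ((sum_le_sum fun i _ => abs_cos_le_one (u * x i)).trans_eq (by simp))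

lemma abs_sinSum_le (u : ℝ) (x : ι → ℝ) : |sinSum u x| ≤ Fintype.card ι :=
  (abs_sum_le_sum_abs _ _).trans
    ((sum_le_sum fun i _ => abs_sin_le_one (u * x i)).trans_eq (by simp))

variable {Ω : Type*} [MeasurableSpace Ω] {P : Measure Ω}

lemma memLp_top_cosSum (u : ℝ) {X : Ω → ι → ℝ} (hX : AEMeasurable X P) :
    MemLp (fun ω => cosSum u (X ω)) ⊤ P :=
  memLp_top_of_bound (by fun_prop) _ (ae_of_all _ fun ω => abs_cosSum_le u (X ω))

lemma memLp_top_sinSum (u : ℝ) {X : Ω → ι → ℝ} (hX : AEMeasurable X P) :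
    MemLp (fun ω => sinSum u (X ω)) ⊤ P :=
  memLp_top_of_bound (by fun_prop) _ (ae_of_all _ fun ω => abs_sinSum_le u (X ω))

end TrigSum

section EvenIID

variable {Ω ι : Type*} [MeasurableSpace Ω] {P : Measure Ω} [Fintype ι] {V : ι → Ω → ℝ}
  {μ : Measure ℝ} [IsProbabilityMeasure μ]

lemma integral_cosSum (hlaw : ∀ i, HasLaw (V i) μ P) (u : ℝ) :
    ∫ ω, cosSum u (V · ω) ∂P = Fintype.card ι * (charFun μ u).re := by
  rw [← integral_cos_mul_eq_re_charFun]
  exact integral_sum_comp_of_hasLaw hlaw (memLp_one_iff_integrable.1 (memLp_cos_mul u 1))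

lemma integral_sinSum_eq_zero_of_map_neg_eq (hlaw : ∀ i, HasLaw (V i) μ P)
    (heven : μ.map (fun x => -x) = μ) (u : ℝ) : ∫ ω, sinSum u (V · ω) ∂P = 0 := by
  unfold sinSum
  rw [integral_sum_comp_of_hasLaw hlaw (memLp_one_iff_integrable.1 (memLp_sin_mul u 1)),
    integral_sin_mul_eq_zero_of_map_neg_eq heven, mul_zero]

lemma integral_cosSum_sq (hind : iIndepFun V P) (hlaw : ∀ i, HasLaw (V i) μ P) (u : ℝ) :
    ∫ ω, cosSum u (V · ω) ^ 2 ∂P = Fintype.card ι * ((1 + (charFun μ (2 * u)).re) / 2)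
      + Fintype.card ι * (Fintype.card ι - 1) * (charFun μ u).re ^ 2 := by
  simp_rw [sq, cosSum]
  rw [integral_sum_mul_sum_of_iIndepFun hind hlaw (memLp_cos_mul u 2) (memLp_cos_mul u 2)]
  simp_rw [← sq, integral_cos_mul_sq, integral_cos_mul_eq_re_charFun]

lemma integral_sinSum_sq_of_map_neg_eq (hind : iIndepFun V P) (hlaw : ∀ i, HasLaw (V i) μ P)
    (heven : μ.map (fun x => -x) = μ) (u : ℝ) :
    ∫ ω, sinSum u (V · ω) ^ 2 ∂P = Fintype.card ι * ((1 - (charFun μ (2 * u)).re) / 2) := by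
  simp_rw [sq, sinSum]
  rw [integral_sum_mul_sum_of_iIndepFun hind hlaw (memLp_sin_mul u 2) (memLp_sin_mul u 2)]
  simp_rw [← sq, integral_sin_mul_sq, integral_sin_mul_eq_zero_of_map_neg_eq heven]
  ring

lemma integral_cosSum_mul_sinSum_eq_zero_of_map_neg_eq (hind : iIndepFun V P)
    (hlaw : ∀ i, HasLaw (V i) μ P) (heven : μ.map (fun x => -x) = μ) (u : ℝ) :
    ∫ ω, cosSum u (V · ω) * sinSum u (V · ω) ∂P = 0 := by
  unfold cosSum sinSum
  rw [integral_sum_mul_sum_of_iIndepFun hind hlaw (memLp_cos_mul u 2) (memLp_sin_mul u 2),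
    integral_cos_mul_mul_sin_mul_eq_zero_of_map_neg_eq heven,
    integral_sin_mul_eq_zero_of_map_neg_eq heven]
  ring

end EvenIID

section IndepArrays

variable {Ω ι κ : Type*} [MeasurableSpace Ω] {P : Measure Ω} [Fintype ι] [Fintype κ]
  {X : Ω → ι → ℝ} {Y : Ω → κ → ℝ}

lemma integral_sumCosAdd [IsFiniteMeasure P] (hXY : IndepFun X Y P) (hX : AEMeasurable X P)
    (hY : AEMeasurable Y P) (u : ℝ) :
    ∫ ω, sumCosAdd u (X ω) (Y ω) ∂P
      = (∫ ω, cosSum u (X ω) ∂P) * (∫ ω, cosSum u (Y ω) ∂P)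
        - (∫ ω, sinSum u (X ω) ∂P) * (∫ ω, sinSum u (Y ω) ∂P) := by
  simp_rw [sumCosAdd_eq]
  rw [integral_sub (((memLp_top_cosSum u hY).mul' (memLp_top_cosSum u hX)).integrable le_top)
      (((memLp_top_sinSum u hY).mul' (memLp_top_sinSum u hX)).integrable le_top),
    hXY.integral_fun_comp_mul_comp hX hY (by fun_prop) (by fun_prop),
    hXY.integral_fun_comp_mul_comp hX hY (by fun_prop) (by fun_prop)]

lemma integral_sumCosAdd_sq [IsFiniteMeasure P] (hXY : IndepFun X Y P)
    (hX : AEMeasurable X P) (hY : AEMeasurable Y P) (u : ℝ) :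
    ∫ ω, sumCosAdd u (X ω) (Y ω) ^ 2 ∂P
      = (∫ ω, cosSum u (X ω) ^ 2 ∂P) * (∫ ω, cosSum u (Y ω) ^ 2 ∂P)
        - 2 * ((∫ ω, cosSum u (X ω) * sinSum u (X ω) ∂P)
          * (∫ ω, cosSum u (Y ω) * sinSum u (Y ω) ∂P))
        + (∫ ω, sinSum u (X ω) ^ 2 ∂P) * (∫ ω, sinSum u (Y ω) ^ 2 ∂P) := by
  have hmul {f g : Ω → ℝ} (hf : MemLp f ⊤ P) (hg : MemLp g ⊤ P) :
      MemLp (fun ω => f ω * g ω) ⊤ P := hg.mul' hf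
  have hint {f : (ι → ℝ) → ℝ} {g : (κ → ℝ) → ℝ} (hf : MemLp (fun ω => f (X ω)) ⊤ P)
      (hg : MemLp (fun ω => g (Y ω)) ⊤ P) : Integrable (fun ω => f (X ω) * g (Y ω)) P :=
    (hmul hf hg).integrable le_top
  have hcX := memLp_top_cosSum u hX
  have hsX := memLp_top_sinSum u hX
  have hcY := memLp_top_cosSum u hY
  have hsY := memLp_top_sinSum u hY
  have hcc := hint (f := (cosSum u · ^ 2)) (g := (cosSum u · ^ 2))
    (by simpa only [sq] using hmul hcX hcX) (by simpa only [sq] using hmul hcY hcY)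
  have hcs := hint (f := fun x => cosSum u x * sinSum u x) (g := fun y => cosSum u y * sinSum u y)
    (hmul hcX hsX) (hmul hcY hsY)
  have hss := hint (f := (sinSum u · ^ 2)) (g := (sinSum u · ^ 2))
    (by simpa only [sq] using hmul hsX hsX) (by simpa only [sq] using hmul hsY hsY)
  have hexpand : ∀ ω, sumCosAdd u (X ω) (Y ω) ^ 2 = cosSum u (X ω) ^ 2 * cosSum u (Y ω) ^ 2
      - 2 * ((cosSum u (X ω) * sinSum u (X ω)) * (cosSum u (Y ω) * sinSum u (Y ω)))
      + sinSum u (X ω) ^ 2 * sinSum u (Y ω) ^ 2 := fun ω => by rw [sumCosAdd_eq]; ring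
  simp_rw [hexpand]
  rw [integral_add (f := fun ω => _ - 2 * _) (hcc.sub (hcs.const_mul 2)) hss,
    integral_sub hcc (hcs.const_mul 2), integral_const_mul,
    hXY.integral_fun_comp_mul_comp hX hY (f := (cosSum u · ^ 2)) (g := (cosSum u · ^ 2))
      (by fun_prop) (by fun_prop),
    hXY.integral_fun_comp_mul_comp hX hY (f := fun x => cosSum u x * sinSum u x)
      (g := fun y => cosSum u y * sinSum u y) (by fun_prop) (by fun_prop),
    hXY.integral_fun_comp_mul_comp hX hY (f := (sinSum u · ^ 2)) (g := (sinSum u · ^ 2))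
      (by fun_prop) (by fun_prop)]

end IndepArrays

theorem ProbabilityTheory.iIndepFun.indepFun_sumElim {Ω ι κ β : Type*} [MeasurableSpace Ω]
    {P : Measure Ω} [Fintype ι] [Fintype κ] [MeasurableSpace β] {f : ι → Ω → β}
    {g : κ → Ω → β} (h : iIndepFun (Sum.elim f g) P) (hf : ∀ i, Measurable (f i))
    (hg : ∀ j, Measurable (g j)) :
    IndepFun (fun ω i => f i ω) (fun ω j => g j ω) P := by
  have hm : ∀ k, Measurable (Sum.elim f g k) := by rintro (i | j); exacts [hf i, hg j]
  exact (h.indepFun_finset _ _ (disjoint_map_inl_map_inr univ univ) hm).comp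
    (φ := fun v i => v ⟨Sum.inl i, by simp⟩) (ψ := fun v j => v ⟨Sum.inr j, by simp⟩)
    (measurable_pi_lambda _ fun _ => measurable_pi_apply _)
    (measurable_pi_lambda _ fun _ => measurable_pi_apply _)

lemma re_arrayPattern {Ω : Type*} {M N : ℕ} (ξ : Fin M → Ω → ℝ) (ζ : Fin N → Ω → ℝ) (u : ℝ)
    (ω : Ω) : (arrayPattern ξ ζ u ω).re = ((M : ℝ) * N)⁻¹ * sumCosAdd u (ξ · ω) (ζ · ω) := by
  have h : (1 / (M * N) : ℂ) = (((M : ℝ) * N)⁻¹ : ℝ) := by push_cast; ring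
  simp only [arrayPattern, h, Complex.re_ofReal_mul, sumCosAdd, Complex.re_sum]
  congr 1
  refine sum_congr rfl fun m _ => sum_congr rfl fun n _ => ?_
  rw [mul_comm Complex.I, Complex.exp_ofReal_mul_I_re, add_comm]

theorem variance_re_arrayPattern_of_hasLaw {Ω : Type*} [MeasurableSpace Ω] {P : Measure Ω}
    [IsProbabilityMeasure P] {μ : Measure ℝ} [IsProbabilityMeasure μ] {M N : ℕ} (hM : 0 < M)
    (hN : 0 < N) {ξ : Fin M → Ω → ℝ} {ζ : Fin N → Ω → ℝ} (hξm : ∀ m, Measurable (ξ m))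
    (hζm : ∀ n, Measurable (ζ n)) (hind : iIndepFun (Sum.elim ξ ζ) P)
    (hξ : ∀ m, HasLaw (ξ m) μ P) (hζ : ∀ n, HasLaw (ζ n) μ P)
    (heven : μ.map (fun x => -x) = μ) (u : ℝ) :
    variance (fun ω => (arrayPattern ξ ζ u ω).re) P
      = 1 / (2 * M * N) * (1 + (charFun μ (2 * u)).re ^ 2) + (charFun μ u).re ^ 2 *
          ((N + M - 2) / (2 * M * N) * (1 + (charFun μ (2 * u)).re)
            - (charFun μ u).re ^ 2 * ((N + M - 1) / (M * N))) := by
  have hξind : iIndepFun ξ P := hind.precomp (g := Sum.inl) Sum.inl_injective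
  have hζind : iIndepFun ζ P := hind.precomp (g := Sum.inr) Sum.inr_injective
  have hXY := hind.indepFun_sumElim hξm hζm
  have hX : AEMeasurable (fun ω m => ξ m ω) P := (measurable_pi_lambda _ hξm).aemeasurable
  have hY : AEMeasurable (fun ω n => ζ n ω) P := (measurable_pi_lambda _ hζm).aemeasurable
  have hLp : MemLp (fun ω => sumCosAdd u (ξ · ω) (ζ · ω)) 2 P := by
    simp_rw [sumCosAdd_eq]
    exact (((memLp_top_cosSum u hY).mul' (memLp_top_cosSum u hX)).sub
      ((memLp_top_sinSum u hY).mul' (memLp_top_sinSum u hX))).mono_exponent le_top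
  rw [funext (re_arrayPattern ξ ζ u), variance_const_mul, variance_eq_sub hLp]
  simp only [Pi.pow_apply]
  rw [integral_sumCosAdd_sq hXY hX hY, integral_sumCosAdd hXY hX hY,
    integral_cosSum_sq hξind hξ, integral_cosSum_sq hζind hζ,
    integral_sinSum_sq_of_map_neg_eq hξind hξ heven,
    integral_sinSum_sq_of_map_neg_eq hζind hζ heven, integral_cosSum hξ, integral_cosSum hζ,
    integral_sinSum_eq_zero_of_map_neg_eq hξ heven,
    integral_cosSum_mul_sinSum_eq_zero_of_map_neg_eq hξind hξ heven]
  simp only [Fintype.card_fin]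
  have hM' : (M : ℝ) ≠ 0 := by positivity
  have hN' : (N : ℝ) ≠ 0 := by positivity
  field_simp
  ring

lemma charFn_eq_charFun {Ω : Type*} [MeasurableSpace Ω] {P : Measure Ω} {x : Ω → ℝ}
    (hx : AEMeasurable x P) (t : ℝ) : charFn P x t = charFun (P.map x) t := by
  rw [charFn, charFun_apply_real, integral_map hx (by fun_prop)]
  congr with ω
  push_cast
  ring_nf

/-- if all the positions `ξ_1,…,ξ_M, ζ_1,…,ζ_N` are mutually independent
and identically distributed with a common even (symmetric) law, represented by the
independent pair `ξ0, ζ0` on `Ω'` (so `z = ξ0 + ζ0`), then for every `u ∈ ℝ`,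
`Var[Re β(u)] = (1/(2MN))(1 + ψ_z(2u))
  + ψ_z(u)·[((N+M−2)/(2MN))·(1 + ψ_ξ(2u)) − ψ_z(u)·(N+M−1)/(MN)]`. -/
theorem variance_re_array_pattern
    {Ω Ω' : Type*} [MeasurableSpace Ω] [MeasurableSpace Ω']
    {P : Measure Ω} [IsProbabilityMeasure P] {P' : Measure Ω'} [IsProbabilityMeasure P']
    {M N : ℕ} (hM : 0 < M) (hN : 0 < N)
    (ξ : Fin M → Ω → ℝ) (ζ : Fin N → Ω → ℝ)
    (hξm : ∀ m, Measurable (ξ m)) (hζm : ∀ n, Measurable (ζ n))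
    (ξ0 ζ0 : Ω' → ℝ) (hξ0 : Measurable ξ0) (hζ0 : Measurable ζ0)
    (hindep : iIndepFun (Sum.elim ξ ζ) P)
    (hξid : ∀ m, IdentDistrib (ξ m) ξ0 P P')
    (hζid : ∀ n, IdentDistrib (ζ n) ξ0 P P')
    (hζ0id : IdentDistrib ζ0 ξ0 P' P')
    (hind0 : IndepFun ξ0 ζ0 P')
    (heven : Measure.map (fun x : ℝ => -x) (Measure.map ξ0 P') = Measure.map ξ0 P')
    (u : ℝ) :
    ((variance (fun ω => (arrayPattern ξ ζ u ω).re) P : ℝ) : ℂ)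
      = (1 / (2 * M * N) : ℂ) * (1 + charFn P' (fun ω' => ξ0 ω' + ζ0 ω') (2 * u))
        + charFn P' (fun ω' => ξ0 ω' + ζ0 ω') u *
            ((((N : ℂ) + M - 2) / (2 * M * N)) * (1 + charFn P' ξ0 (2 * u))
              - charFn P' (fun ω' => ξ0 ω' + ζ0 ω') u * (((N : ℂ) + M - 1) / (M * N))) := by
  set μ := P'.map ξ0
  have : IsProbabilityMeasure μ := Measure.isProbabilityMeasure_map hξ0.aemeasurable
  have hreal : ∀ t, charFun μ t = (charFun μ t).re :=
    fun t => (Complex.conj_eq_iff_re.1 (conj_charFun_of_map_neg_eq heven t)).symm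
  have hψξ : ∀ t, charFn P' ξ0 t = charFun μ t := charFn_eq_charFun hξ0.aemeasurable
  have hψz : ∀ t, charFn P' (fun ω' => ξ0 ω' + ζ0 ω') t = charFun μ t ^ 2 := fun t => by
    rw [charFn_eq_charFun (by fun_prop), hind0.charFun_map_fun_add_eq_mul hξ0.aemeasurable
      hζ0.aemeasurable, hζ0id.map_eq, Pi.mul_apply, sq]
  rw [hψξ, hψz, hψz, hreal u, hreal (2 * u), variance_re_arrayPattern_of_hasLaw hM hN hξm hζm
    hindep (fun m => ⟨(hξid m).aemeasurable_fst, (hξid m).map_eq⟩)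
    (fun n => ⟨(hζid n).aemeasurable_fst, (hζid n).map_eq⟩) heven u]
  push_cast
  ring
end

section
/- Let ξ_1,…,ξ_M and ζ_1,…,ζ_N be mutually independent real random variables, all identically distributed with a common even probability density p, and let η(u) = E[β(u)] denote the mean array pattern (which is real-valued since p is even). Then for every u ∈ ℝ, the real and imaginary parts of the array pattern are uncorrelated: E[(Re β(u) − η(u)) · Im β(u)] = 0. -/
open MeasureTheory ProbabilityTheory

/-!
The law of the position vector `(ξ, ζ)` is a product of copies of one symmetric law, hence it
is invariant under `x ↦ -x`. Negating all positions conjugates `β(u)`, so `Re β(u)` is even and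
`Im β(u)` is odd in the positions; the integrand `(Re β(u) - c) · Im β(u)` is then odd for every
constant `c`, and its expectation vanishes.
-/

section Symmetric

variable {Ω E : Type*} [MeasurableSpace Ω] {P : Measure Ω}
  [MeasurableSpace E] [Neg E]

theorem identDistrib_neg_of_map_neg_eq [MeasurableNeg E] {X : Ω → E} (hX : AEMeasurable X P)
    (h : (P.map X).map Neg.neg = P.map X) :
    IdentDistrib X (fun ω => -X ω) P P where
  aemeasurable_fst := hX
  aemeasurable_snd := measurable_neg.comp_aemeasurable hX
  map_eq := by
    rw [AEMeasurable.map_map_of_aemeasurable measurable_neg.aemeasurable hX] at h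
    exact h.symm

theorem integral_comp_eq_zero_of_identDistrib_neg {X : Ω → E}
    (hX : IdentDistrib X (fun ω => -X ω) P P) {g : E → ℝ}
    (hg : Measurable g) (hodd : ∀ x, g (-x) = -g x) :
    ∫ ω, g (X ω) ∂P = 0 := by
  have h := (hX.comp hg).integral_eq
  simp only [Function.comp_def, hodd, integral_neg] at h
  exact CharZero.eq_neg_self_iff.mp h

end Symmetric

theorem arrayPattern_neg {Ω : Type*} {M N : ℕ} (ξ : Fin M → Ω → ℝ) (ζ : Fin N → Ω → ℝ)
    (u : ℝ) (ω : Ω) :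
    arrayPattern (-ξ) (-ζ) u ω = starRingEnd ℂ (arrayPattern ξ ζ u ω) := by
  simp only [arrayPattern, map_mul, map_div₀, map_one, map_natCast, map_sum, ← Complex.exp_conj,
    Complex.conj_I, Complex.conj_ofReal, Pi.neg_apply]
  push_cast
  ring_nf

noncomputable def positionArrayPattern (M N : ℕ) (u : ℝ) (x : Fin M ⊕ Fin N → ℝ) : ℂ :=
  arrayPattern (fun m x => x (Sum.inl m)) (fun n x => x (Sum.inr n)) u x

@[fun_prop]
theorem continuous_positionArrayPattern (M N : ℕ) (u : ℝ) :
    Continuous (positionArrayPattern M N u) := by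
  unfold positionArrayPattern arrayPattern
  fun_prop

theorem positionArrayPattern_neg (M N : ℕ) (u : ℝ) (x : Fin M ⊕ Fin N → ℝ) :
    positionArrayPattern M N u (-x) = starRingEnd ℂ (positionArrayPattern M N u x) :=
  arrayPattern_neg (fun m (x : Fin M ⊕ Fin N → ℝ) => x (Sum.inl m))
    (fun n (x : Fin M ⊕ Fin N → ℝ) => x (Sum.inr n)) u x

theorem re_im_array_pattern_uncorrelated_general
    {Ω : Type*} [MeasurableSpace Ω]
    {P : Measure Ω} [IsProbabilityMeasure P]
    {M N : ℕ} (hM : 0 < M)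
    (ξ : Fin M → Ω → ℝ) (ζ : Fin N → Ω → ℝ)
    (hindep : iIndepFun (Sum.elim ξ ζ) P)
    (hid : ∀ m n, IdentDistrib (ξ m) (Sum.elim ξ ζ n) P P)
    (heven : Measure.map (fun x : ℝ => -x) (Measure.map (ξ ⟨0, hM⟩) P)
      = Measure.map (ξ ⟨0, hM⟩) P)
    (u : ℝ) :
    ∫ ω, ((arrayPattern ξ ζ u ω).re - (∫ ω', arrayPattern ξ ζ u ω' ∂P).re)
        * (arrayPattern ξ ζ u ω).im ∂P = 0 := by
  have hsymm (i : Fin M ⊕ Fin N) :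
      IdentDistrib (Sum.elim ξ ζ i) (fun ω => -Sum.elim ξ ζ i ω) P P :=
    (hid _ i).symm.trans <|
      (identDistrib_neg_of_map_neg_eq (hid _ i).aemeasurable_fst heven).trans <|
        (hid _ i).comp measurable_neg
  have hpositions : IdentDistrib (fun ω i => Sum.elim ξ ζ i ω) (fun ω i => -Sum.elim ξ ζ i ω)
      P P :=
    IdentDistrib.pi hsymm hindep (hindep.comp (fun _ => Neg.neg) fun _ => measurable_neg)
  set c := (∫ ω', arrayPattern ξ ζ u ω' ∂P).re
  refine integral_comp_eq_zero_of_identDistrib_neg hpositions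
    (g := fun x => ((positionArrayPattern M N u x).re - c) * (positionArrayPattern M N u x).im)
    ?_ fun x => ?_
  · fun_prop
  · simp only [positionArrayPattern_neg, Complex.conj_re, Complex.conj_im]
    ring

/-- if all the positions `ξ_1,…,ξ_M, ζ_1,…,ζ_N` are mutually independent
and identically distributed with a common even (symmetric) law, then for every `u ∈ ℝ`
the real and imaginary parts of the array pattern are uncorrelated:
`E[(Re β(u) − η(u)) · Im β(u)] = 0`, where `η(u) = E[β(u)]` is the (real-valued)
mean array pattern. -/
theorem re_im_array_pattern_uncorrelated
    {Ω : Type*} [MeasurableSpace Ω]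
    {P : Measure Ω} [IsProbabilityMeasure P]
    {M N : ℕ} (hM : 0 < M) (hN : 0 < N)
    (ξ : Fin M → Ω → ℝ) (ζ : Fin N → Ω → ℝ)
    (hξm : ∀ m, Measurable (ξ m)) (hζm : ∀ n, Measurable (ζ n))
    (hindep : iIndepFun (Sum.elim ξ ζ) P)
    (hid : ∀ m n, IdentDistrib (ξ m) (Sum.elim ξ ζ n) P P)
    (heven : Measure.map (fun x : ℝ => -x) (Measure.map (ξ ⟨0, hM⟩) P)
      = Measure.map (ξ ⟨0, hM⟩) P)
    (u : ℝ) :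
    ∫ ω, ((arrayPattern ξ ζ u ω).re - (∫ ω', arrayPattern ξ ζ u ω' ∂P).re)
        * (arrayPattern ξ ζ u ω).im ∂P = 0 :=
  re_im_array_pattern_uncorrelated_general hM ξ ζ hindep hid heven u
end

section
/- Let X and Y be independent Rayleigh random variables with scale parameters σ_1 > 0 and σ_2 > 0 respectively. Then for every q > 0, the complementary cumulative distribution function of the product satisfies P(XY > q) = x · K_1(x), where x = q/(σ_1 σ_2) and K_1(x) = ∫_0^∞ exp(−x cosh t) cosh t dt is the modified Bessel function of the second kind of order 1 (expressed via its integral representation). -/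
/-!
Conditioning on `X = s` gives `P(XY > q) = ∫₀^∞ f_{σ₁}(s) exp(-(q/s)²/(2σ₂²)) ds`, since the
Rayleigh tail is `P(Y > a) = exp(-a²/(2σ₂²))`. With `x = q/(σ₁σ₂)`, the substitution
`w = s²/(xσ₁²)` turns this into `(x/2) ∫₀^∞ exp(-(x/2)(w + w⁻¹)) dw`, and then `w = eᵘ`
turns the exponent into `-x cosh u`; symmetrizing `eᵘ` to `cosh u` under `u ↦ -u` leaves
`x ∫₀^∞ exp(-x cosh u) cosh u du = x K₁(x)`.
-/

open MeasureTheory ProbabilityTheory Set Real Filter Topology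

noncomputable def rayleighLaw (σ : ℝ) : Measure ℝ :=
  MeasureTheory.volume.withDensity fun t =>
    ENNReal.ofReal (if 0 ≤ t then t / σ ^ 2 * Real.exp (-t ^ 2 / (2 * σ ^ 2)) else 0)

section Substitution

variable {E : Type*} [NormedAddCommGroup E] [NormedSpace ℝ E]

theorem integral_comp_exp (g : ℝ → E) : ∫ u, exp u • g (exp u) = ∫ w in Ioi 0, g w := by
  rw [← range_exp, ← image_univ, integral_image_eq_integral_abs_deriv_smul MeasurableSet.univ
    (fun u _ => (hasDerivAt_exp u).hasDerivWithinAt) exp_injective.injOn, Measure.restrict_univ]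
  simp_rw [abs_of_pos (exp_pos _)]

theorem integrable_comp_exp_iff (g : ℝ → E) :
    Integrable (fun u => exp u • g (exp u)) ↔ IntegrableOn g (Ioi 0) := by
  rw [← range_exp, ← image_univ, integrableOn_image_iff_integrableOn_abs_deriv_smul
    MeasurableSet.univ (fun u _ => (hasDerivAt_exp u).hasDerivWithinAt) exp_injective.injOn,
    integrableOn_univ]
  simp_rw [abs_of_pos (exp_pos _)]

theorem integral_Ioi_smul_comp_const_mul_sq (g : ℝ → E) {a : ℝ} (ha : 0 < a) :
    ∫ s in Ioi 0, s • g (a * s ^ 2) = (2 * a)⁻¹ • ∫ w in Ioi 0, g w := by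
  have h := integral_comp_rpow_Ioi_of_pos (g := fun w => g (a * w)) two_pos
  rw [integral_comp_mul_left_Ioi g 0 ha, mul_zero] at h
  rw [mul_inv, mul_smul, ← h, ← integral_smul]
  refine setIntegral_congr_fun measurableSet_Ioi fun s _ => ?_
  norm_num [smul_smul]
  ring_nf

end Substitution

theorem integral_exp_mul_of_even {G : ℝ → ℝ} (hG : ∀ u, G (-u) = G u)
    (hint : Integrable fun u => exp u * G u) :
    ∫ u, exp u * G u = 2 * ∫ u in Ioi 0, cosh u * G u := by
  have hreflect : ∫ u, exp (-u) * G u = ∫ u, exp u * G u := by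
    simpa only [hG] using integral_neg_eq_self (fun u => exp u * G u) volume
  have hint_reflect : Integrable fun u => exp (-u) * G u := by
    simpa only [hG] using hint.comp_neg
  have hG_abs (u : ℝ) : G |u| = G u := by
    rcases abs_choice u with h | h <;> simp only [h, hG]
  have hcosh : ∫ u, cosh |u| * G |u| = ∫ u, (exp u * G u + exp (-u) * G u) / 2 := by
    congr 1 with u
    rw [cosh_abs, hG_abs, cosh_eq]
    ring
  rw [← integral_comp_abs (f := fun u => cosh u * G u), hcosh, integral_div,
    integral_add hint hint_reflect, hreflect]
  ring

noncomputable def besselK1 (x : ℝ) : ℝ := ∫ t in Ioi 0, exp (-x * cosh t) * cosh t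

theorem integral_Ioi_exp_neg_mul_add_inv {x : ℝ} (hx : 0 < x) :
    ∫ w in Ioi 0, exp (-(x / 2) * (w + w⁻¹)) = 2 * besselK1 x := by
  have hcosh (u : ℝ) : exp (-(x / 2) * (exp u + (exp u)⁻¹)) = exp (-x * cosh u) := by
    rw [cosh_eq, exp_neg]
    ring_nf
  have hint : IntegrableOn (fun w => exp (-(x / 2) * (w + w⁻¹))) (Ioi 0) := by
    refine (exp_neg_integrableOn_Ioi 0 (half_pos hx)).mono' (by fun_prop) ?_
    refine (ae_restrict_iff' measurableSet_Ioi).mpr (ae_of_all _ fun w (hw : 0 < w) => ?_)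
    rw [norm_of_nonneg (exp_pos _).le, exp_le_exp]
    nlinarith [inv_pos.mpr hw]
  rw [← integrable_comp_exp_iff] at hint
  simp only [smul_eq_mul, hcosh] at hint
  rw [← integral_comp_exp, besselK1]
  simp only [smul_eq_mul, hcosh]
  rw [integral_exp_mul_of_even (fun u => by rw [cosh_neg]) hint]
  simp_rw [mul_comm (cosh _)]

theorem integral_rayleigh_density_mul_tail {σ₁ σ₂ q : ℝ} (hσ₁ : 0 < σ₁) (hσ₂ : 0 < σ₂)
    (hq : 0 < q) :
    ∫ s in Ioi 0, s / σ₁ ^ 2 * exp (-s ^ 2 / (2 * σ₁ ^ 2)) * exp (-(q / s) ^ 2 / (2 * σ₂ ^ 2))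
      = q / (σ₁ * σ₂) * besselK1 (q / (σ₁ * σ₂)) := by
  set x := q / (σ₁ * σ₂)
  have hx : 0 < x := by positivity
  have ha : 0 < (x * σ₁ ^ 2)⁻¹ := by positivity
  have hsubst : ∀ s ∈ Ioi (0 : ℝ),
      s / σ₁ ^ 2 * exp (-s ^ 2 / (2 * σ₁ ^ 2)) * exp (-(q / s) ^ 2 / (2 * σ₂ ^ 2))
        = (σ₁ ^ 2)⁻¹ *
          (s • exp (-(x / 2) * ((x * σ₁ ^ 2)⁻¹ * s ^ 2 + ((x * σ₁ ^ 2)⁻¹ * s ^ 2)⁻¹))) := by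
    intro s (hs : 0 < s)
    rw [smul_eq_mul, mul_assoc, ← exp_add]
    simp only [x]
    field_simp
    ring_nf
  rw [setIntegral_congr_fun measurableSet_Ioi hsubst, integral_const_mul,
    integral_Ioi_smul_comp_const_mul_sq (fun w => exp (-(x / 2) * (w + w⁻¹))) ha,
    integral_Ioi_exp_neg_mul_add_inv hx, smul_eq_mul]
  field_simp

instance (σ : ℝ) : SigmaFinite (rayleighLaw σ) := SigmaFinite.withDensity_ofReal _

theorem hasDerivAt_neg_exp_neg_sq_div {σ : ℝ} (hσ : σ ≠ 0) (t : ℝ) :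
    HasDerivAt (fun t => -exp (-t ^ 2 / (2 * σ ^ 2)))
      (t / σ ^ 2 * exp (-t ^ 2 / (2 * σ ^ 2))) t := by
  refine (((hasDerivAt_pow 2 t).fun_neg.div_const (2 * σ ^ 2)).exp).fun_neg.congr_deriv ?_
  field_simp
  ring

theorem tendsto_exp_neg_sq_div_atTop {σ : ℝ} (hσ : σ ≠ 0) :
    Tendsto (fun t => exp (-t ^ 2 / (2 * σ ^ 2))) atTop (𝓝 0) := by
  refine tendsto_exp_atBot.comp ?_
  simp_rw [neg_div]
  exact tendsto_neg_atTop_atBot.comp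
    ((tendsto_pow_atTop two_ne_zero).atTop_div_const (by positivity))

theorem rayleighLaw_Ioi {σ : ℝ} (hσ : σ ≠ 0) {a : ℝ} (ha : 0 ≤ a) :
    rayleighLaw σ (Ioi a) = ENNReal.ofReal (exp (-a ^ 2 / (2 * σ ^ 2))) := by
  have hpdf_nonneg : ∀ t ∈ Ioi a, 0 ≤ t / σ ^ 2 * exp (-t ^ 2 / (2 * σ ^ 2)) := fun t ht => by
    have : 0 ≤ t := ha.trans (le_of_lt ht)
    positivity
  have hint := integrableOn_Ioi_deriv_of_nonneg'
    (fun t _ => hasDerivAt_neg_exp_neg_sq_div hσ t) hpdf_nonneg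
    (tendsto_exp_neg_sq_div_atTop hσ).neg
  rw [rayleighLaw, withDensity_apply _ measurableSet_Ioi,
    setLIntegral_congr_fun measurableSet_Ioi (fun t (ht : a < t) => by
      rw [if_pos (ha.trans ht.le)]),
    ← ofReal_integral_eq_lintegral_ofReal hint
      ((ae_restrict_iff' measurableSet_Ioi).mpr (ae_of_all _ hpdf_nonneg)),
    integral_Ioi_of_hasDerivAt_of_nonneg' (fun t _ => hasDerivAt_neg_exp_neg_sq_div hσ t)
      hpdf_nonneg (tendsto_exp_neg_sq_div_atTop hσ).neg]
  simp

theorem rayleighLaw_Iio_zero (σ : ℝ) : rayleighLaw σ (Iio 0) = 0 := by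
  rw [rayleighLaw, withDensity_apply _ measurableSet_Iio,
    setLIntegral_congr_fun measurableSet_Iio (fun t (ht : t < 0) => by rw [if_neg ht.not_ge])]
  simp

theorem setLIntegral_Ioi_rayleighLaw (σ : ℝ) (g : ℝ → ENNReal) :
    ∫⁻ s in Ioi 0, g s ∂rayleighLaw σ
      = ∫⁻ s in Ioi 0, ENNReal.ofReal (s / σ ^ 2 * exp (-s ^ 2 / (2 * σ ^ 2))) * g s := by
  rw [rayleighLaw, setLIntegral_withDensity_eq_setLIntegral_mul_non_measurable _
    (Measurable.ite measurableSet_Ici (by fun_prop) measurable_const).ennreal_ofReal g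
    measurableSet_Ioi (ae_of_all _ fun _ => ENNReal.ofReal_lt_top)]
  exact setLIntegral_congr_fun measurableSet_Ioi fun t (ht : 0 < t) => by
    rw [Pi.mul_apply, if_pos ht.le]

theorem prod_setOf_lt_mul {μ ν : Measure ℝ} [SFinite ν] (hμ : μ (Iio 0) = 0) {q : ℝ}
    (hq : 0 < q) : μ.prod ν {p | q < p.1 * p.2} = ∫⁻ s in Ioi 0, ν (Ioi (q / s)) ∂μ := by
  rw [Measure.prod_apply (measurableSet_lt measurable_const (by fun_prop)),
    ← lintegral_indicator measurableSet_Ioi]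
  have hnonneg : ∀ᵐ s ∂μ, 0 ≤ s := by
    simpa only [mem_Iio, not_lt] using measure_eq_zero_iff_ae_notMem.1 hμ
  refine lintegral_congr_ae (hnonneg.mono fun s hs => ?_)
  rcases hs.eq_or_lt with rfl | hs
  · simp [hq.not_gt]
  · have hslice : Prod.mk s ⁻¹' {p : ℝ × ℝ | q < p.1 * p.2} = Ioi (q / s) := by
      ext t
      simp [div_lt_iff₀' hs]
    dsimp only
    rw [hslice, indicator_of_mem (show s ∈ Ioi 0 from hs)]

theorem toReal_setLIntegral_rayleighLaw_Ioi_div {σ₁ σ₂ q : ℝ} (hσ₁ : 0 < σ₁) (hσ₂ : 0 < σ₂)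
    (hq : 0 < q) :
    (∫⁻ s in Ioi 0, rayleighLaw σ₂ (Ioi (q / s)) ∂rayleighLaw σ₁).toReal
      = q / (σ₁ * σ₂) * besselK1 (q / (σ₁ * σ₂)) := by
  have htail : ∀ s ∈ Ioi (0 : ℝ),
      ENNReal.ofReal (s / σ₁ ^ 2 * exp (-s ^ 2 / (2 * σ₁ ^ 2))) * rayleighLaw σ₂ (Ioi (q / s))
        = ENNReal.ofReal (s / σ₁ ^ 2 * exp (-s ^ 2 / (2 * σ₁ ^ 2))
            * exp (-(q / s) ^ 2 / (2 * σ₂ ^ 2))) := fun s (hs : 0 < s) => by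
    rw [rayleighLaw_Ioi hσ₂.ne' (by positivity), ← ENNReal.ofReal_mul (by positivity)]
  have hnonneg : ∀ᵐ s ∂volume.restrict (Ioi (0 : ℝ)),
      0 ≤ s / σ₁ ^ 2 * exp (-s ^ 2 / (2 * σ₁ ^ 2)) * exp (-(q / s) ^ 2 / (2 * σ₂ ^ 2)) :=
    (ae_restrict_iff' measurableSet_Ioi).mpr (ae_of_all _ fun s (hs : 0 < s) => by positivity)
  rw [setLIntegral_Ioi_rayleighLaw, setLIntegral_congr_fun measurableSet_Ioi htail,
    ← integral_eq_lintegral_of_nonneg_ae hnonneg (by fun_prop),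
    integral_rayleigh_density_mul_tail hσ₁ hσ₂ hq]

theorem rayleigh_product_tail_general
    {Ω : Type*} [MeasurableSpace Ω] {P : Measure Ω}
    (σ₁ σ₂ : ℝ) (hσ₁ : 0 < σ₁) (hσ₂ : 0 < σ₂)
    (X Y : Ω → ℝ) (hX : Measurable X) (hY : Measurable Y)
    (hXlaw : Measure.map X P = rayleighLaw σ₁)
    (hYlaw : Measure.map Y P = rayleighLaw σ₂)
    (hindep : IndepFun X Y P)
    (q : ℝ) (hq : 0 < q) :
    (P {ω | q < X ω * Y ω}).toReal
      = (q / (σ₁ * σ₂)) *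
          ∫ t in Set.Ioi (0 : ℝ),
            Real.exp (-(q / (σ₁ * σ₂)) * Real.cosh t) * Real.cosh t := by
  have hjoint : P.map (fun ω => (X ω, Y ω)) = (rayleighLaw σ₁).prod (rayleighLaw σ₂) := by
    rw [← hXlaw, ← hYlaw]
    refine (indepFun_iff_map_prod_eq_prod_map_map' hX.aemeasurable hY.aemeasurable ?_ ?_).1 hindep
    · rw [hXlaw]; infer_instance
    · rw [hYlaw]; infer_instance
  have hevent : {ω | q < X ω * Y ω} = (fun ω => (X ω, Y ω)) ⁻¹' {p | q < p.1 * p.2} := rfl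
  rw [hevent, ← Measure.map_apply (hX.prodMk hY) (measurableSet_lt measurable_const (by fun_prop)),
    hjoint, prod_setOf_lt_mul (rayleighLaw_Iio_zero σ₁) hq,
    toReal_setLIntegral_rayleighLaw_Ioi_div hσ₁ hσ₂ hq, besselK1]

/-- if `X` and `Y` are independent Rayleigh random variables with scale
parameters `σ₁ > 0` and `σ₂ > 0`, then for every `q > 0`,
`P(XY > q) = x·K₁(x)` with `x = q/(σ₁σ₂)`, where
`K₁(x) = ∫_0^∞ exp(−x cosh t) cosh t dt` is the modified Bessel function of the second
kind of order 1 (in its integral representation). -/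
theorem rayleigh_product_tail
    {Ω : Type*} [MeasurableSpace Ω] {P : Measure Ω} [IsProbabilityMeasure P]
    (σ₁ σ₂ : ℝ) (hσ₁ : 0 < σ₁) (hσ₂ : 0 < σ₂)
    (X Y : Ω → ℝ) (hX : Measurable X) (hY : Measurable Y)
    (hXlaw : Measure.map X P = rayleighLaw σ₁)
    (hYlaw : Measure.map Y P = rayleighLaw σ₂)
    (hindep : IndepFun X Y P)
    (q : ℝ) (hq : 0 < q) :
    (P {ω | q < X ω * Y ω}).toReal
      = (q / (σ₁ * σ₂)) *
          ∫ t in Set.Ioi (0 : ℝ),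
            Real.exp (-(q / (σ₁ * σ₂)) * Real.cosh t) * Real.cosh t :=
  rayleigh_product_tail_general σ₁ σ₂ hσ₁ hσ₂ X Y hX hY hXlaw hYlaw hindep q hq
end

section
/- Let ξ_1,…,ξ_M be i.i.d. real random variables with distribution p(ξ), let ζ_1,…,ζ_N be i.i.d. real random variables with distribution p(ζ), all mutually independent, let z = ξ + ζ where ξ, ζ are independent with these distributions, and let φ_1,…,φ_G be a uniform grid. Then the measurement matrix A satisfies the isotropy property — E[A(t,:)ᴴ A(t,:)] = I_G for every row index t — if and only if ψ_z(u_{1,i}) = 0 for every i = 2,…,G, where u_{1,i} = π Z (φ_i − φ_1). -/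
open MeasureTheory ProbabilityTheory

/-- Entry of the random MIMO measurement matrix:
`A_{(m,n),g} = exp(i π Z φ_g (ξ_m + ζ_n))`. -/
noncomputable def measEntry {Ω : Type*} {M N G : ℕ} (Z : ℝ)
    (ξ : Fin M → Ω → ℝ) (ζ : Fin N → Ω → ℝ) (φ : Fin G → ℝ)
    (ω : Ω) (t : Fin M × Fin N) (g : Fin G) : ℂ :=
  Complex.exp (Complex.I * ((Real.pi * Z * φ g * (ξ t.1 ω + ζ t.2 ω) : ℝ) : ℂ))

section CharFn

variable {Ω : Type*} [MeasurableSpace Ω]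

lemma charFn_zero (P : Measure Ω) [IsProbabilityMeasure P] (x : Ω → ℝ) : charFn P x 0 = 1 := by
  simp [charFn]

lemma charFn_neg (P : Measure Ω) (x : Ω → ℝ) (u : ℝ) :
    charFn P x (-u) = (starRingEnd ℂ) (charFn P x u) := by
  rw [charFn, charFn, ← integral_conj]
  congr 1 with ω
  rw [← Complex.exp_conj]
  simp

lemma ProbabilityTheory.IdentDistrib.charFn_eq {Ω' : Type*} [MeasurableSpace Ω'] {P : Measure Ω}
    {P' : Measure Ω'} {x : Ω → ℝ} {y : Ω' → ℝ} (h : IdentDistrib x y P P') (u : ℝ) :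
    charFn P x u = charFn P' y u :=
  (h.comp (by fun_prop : Measurable fun r : ℝ =>
    Complex.exp (Complex.I * ((u * r : ℝ) : ℂ)))).integral_eq

end CharFn

lemma conj_exp_mul_exp (a b s : ℝ) :
    (starRingEnd ℂ) (Complex.exp (Complex.I * ((a * s : ℝ) : ℂ))) *
        Complex.exp (Complex.I * ((b * s : ℝ) : ℂ)) =
      Complex.exp (Complex.I * (((b - a) * s : ℝ) : ℂ)) := by
  rw [← Complex.exp_conj, ← Complex.exp_add, map_mul, Complex.conj_I, Complex.conj_ofReal]
  push_cast
  ring_nf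

lemma integral_conj_measEntry_mul {Ω : Type*} [MeasurableSpace Ω] (P : Measure Ω)
    {M N G : ℕ} (Z : ℝ) (ξ : Fin M → Ω → ℝ) (ζ : Fin N → Ω → ℝ) (φ : Fin G → ℝ)
    (t : Fin M × Fin N) (i l : Fin G) :
    ∫ ω, (starRingEnd ℂ) (measEntry Z ξ ζ φ ω t i) * measEntry Z ξ ζ φ ω t l ∂P =
      charFn P (fun ω => ξ t.1 ω + ζ t.2 ω) (Real.pi * Z * (φ l - φ i)) := by
  simp only [measEntry, charFn]
  congr 1 with ω
  convert conj_exp_mul_exp (Real.pi * Z * φ i) (Real.pi * Z * φ l) (ξ t.1 ω + ζ t.2 ω)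
    using 3
  ring_nf

lemma sub_eq_sub_zero_of_uniform_grid {G : ℕ} (hG : 0 < G) {φ : Fin G → ℝ} {φ1 Δ : ℝ}
    (hgrid : ∀ g : Fin G, φ g = φ1 + (g : ℝ) * Δ) {a b : Fin G} (hba : b ≤ a) :
    φ a - φ b = φ ⟨a - b, by omega⟩ - φ ⟨0, hG⟩ := by
  simp only [hgrid, Nat.cast_sub (Fin.le_iff_val_le_val.mp hba)]
  push_cast
  ring

lemma of_uniform_grid_eq_one_iff {G : ℕ} (hG : 0 < G) {φ : Fin G → ℝ} {φ1 Δ : ℝ}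
    (hgrid : ∀ g : Fin G, φ g = φ1 + (g : ℝ) * Δ) {f : ℝ → ℂ} (hf0 : f 0 = 1)
    (hf_neg : ∀ u, f (-u) = (starRingEnd ℂ) (f u)) :
    Matrix.of (fun i l : Fin G => f (φ l - φ i)) = 1 ↔
      ∀ i : Fin G, i ≠ ⟨0, hG⟩ → f (φ i - φ ⟨0, hG⟩) = 0 := by
  constructor
  · intro h i hi
    simpa [Matrix.one_apply_ne (Ne.symm hi)] using congrFun (congrFun h ⟨0, hG⟩) i
  · intro h
    have hlt : ∀ a b : Fin G, b < a → f (φ a - φ b) = 0 := fun a b hba => by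
      rw [sub_eq_sub_zero_of_uniform_grid hG hgrid hba.le]
      exact h _ (by simp [Fin.ext_iff]; omega)
    ext i l
    rcases lt_trichotomy i l with hil | rfl | hli
    · rw [Matrix.of_apply, Matrix.one_apply_ne hil.ne, hlt l i hil]
    · simp [hf0]
    · rw [Matrix.of_apply, Matrix.one_apply_ne hli.ne', ← neg_sub, hf_neg, hlt i l hli, map_zero]

theorem isotropy_iff_charFun_vanishes_general
    {Ω Ω' : Type*} [MeasurableSpace Ω] [MeasurableSpace Ω']
    {P : Measure Ω} [IsProbabilityMeasure P] {P' : Measure Ω'} [IsProbabilityMeasure P']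
    {M N G : ℕ} (hM : 0 < M) (hN : 0 < N) (hG : 0 < G)
    (Z : ℝ)
    (ξ : Fin M → Ω → ℝ) (ζ : Fin N → Ω → ℝ)
    (ξ0 ζ0 : Ω' → ℝ)
    (hindep : iIndepFun (Sum.elim ξ ζ) P)
    (hξid : ∀ m, IdentDistrib (ξ m) ξ0 P P')
    (hζid : ∀ n, IdentDistrib (ζ n) ζ0 P P')
    (hind0 : IndepFun ξ0 ζ0 P')
    (φ : Fin G → ℝ) (φ1 Δ : ℝ) (hgrid : ∀ g : Fin G, φ g = φ1 + (g : ℝ) * Δ) :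
    (∀ t : Fin M × Fin N,
        Matrix.of (fun i l : Fin G =>
            ∫ ω, (starRingEnd ℂ) (measEntry Z ξ ζ φ ω t i) * measEntry Z ξ ζ φ ω t l ∂P)
          = (1 : Matrix (Fin G) (Fin G) ℂ))
      ↔ ∀ i : Fin G, i ≠ ⟨0, hG⟩ →
          charFn P' (fun ω' => ξ0 ω' + ζ0 ω')
            (Real.pi * Z * (φ i - φ ⟨0, hG⟩)) = 0 := by
  set ψ : ℝ → ℂ := fun u => charFn P' (fun ω' => ξ0 ω' + ζ0 ω') (Real.pi * Z * u)
  have hsum (t : Fin M × Fin N) :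
      IdentDistrib (fun ω => ξ t.1 ω + ζ t.2 ω) (fun ω' => ξ0 ω' + ζ0 ω') P P' := by
    have hind : IndepFun (ξ t.1) (ζ t.2) P := by
      simpa using hindep.indepFun (i := Sum.inl t.1) (j := Sum.inr t.2) (by simp)
    exact ((hξid t.1).prodMk (hζid t.2) hind hind0).comp measurable_add
  have hgram (t : Fin M × Fin N) (i l : Fin G) :
      ∫ ω, (starRingEnd ℂ) (measEntry Z ξ ζ φ ω t i) * measEntry Z ξ ζ φ ω t l ∂P =
        ψ (φ l - φ i) := by
    rw [integral_conj_measEntry_mul, (hsum t).charFn_eq]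
  have : Nonempty (Fin M × Fin N) := ⟨(⟨0, hM⟩, ⟨0, hN⟩)⟩
  simp only [hgram, forall_const]
  exact of_uniform_grid_eq_one_iff hG hgrid (by simp [ψ, charFn_zero])
    (fun u => by simp only [ψ, mul_neg, charFn_neg])

/-- with i.i.d. transmitter positions (law of `ξ0`), i.i.d. receiver
positions (law of `ζ0`), all mutually independent, and a uniform grid `φ`, the
measurement matrix `A` satisfies the isotropy property
`E[A(t,:)ᴴ A(t,:)] = I_G` for every row `t`, if and only if
`ψ_z(u_{1,i}) = 0` for all `i = 2,…,G`, where `z = ξ0 + ζ0` and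
`u_{1,i} = π Z (φ_i − φ_1)`. -/
theorem isotropy_iff_charFun_vanishes
    {Ω Ω' : Type*} [MeasurableSpace Ω] [MeasurableSpace Ω']
    {P : Measure Ω} [IsProbabilityMeasure P] {P' : Measure Ω'} [IsProbabilityMeasure P']
    {M N G : ℕ} (hM : 0 < M) (hN : 0 < N) (hG : 0 < G)
    (Z : ℝ) (hZ : 0 < Z)
    (ξ : Fin M → Ω → ℝ) (ζ : Fin N → Ω → ℝ)
    (hξm : ∀ m, Measurable (ξ m)) (hζm : ∀ n, Measurable (ζ n))
    (ξ0 ζ0 : Ω' → ℝ) (hξ0 : Measurable ξ0) (hζ0 : Measurable ζ0)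
    (hindep : iIndepFun (Sum.elim ξ ζ) P)
    (hξid : ∀ m, IdentDistrib (ξ m) ξ0 P P')
    (hζid : ∀ n, IdentDistrib (ζ n) ζ0 P P')
    (hind0 : IndepFun ξ0 ζ0 P')
    (φ : Fin G → ℝ) (φ1 Δ : ℝ) (hgrid : ∀ g : Fin G, φ g = φ1 + (g : ℝ) * Δ) :
    (∀ t : Fin M × Fin N,
        Matrix.of (fun i l : Fin G =>
            ∫ ω, (starRingEnd ℂ) (measEntry Z ξ ζ φ ω t i) * measEntry Z ξ ζ φ ω t l ∂P)
          = (1 : Matrix (Fin G) (Fin G) ℂ))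
      ↔ ∀ i : Fin G, i ≠ ⟨0, hG⟩ →
          charFn P' (fun ω' => ξ0 ω' + ζ0 ω')
            (Real.pi * Z * (φ i - φ ⟨0, hG⟩)) = 0 :=
  isotropy_iff_charFun_vanishes_general hM hN hG Z ξ ζ ξ0 ζ0 hindep hξid hζid hind0 φ φ1 Δ hgrid
end
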